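/- arXiv:2110.05277 — 3 statements merged into one kernel-verified Lean document; each statement's English description precedes it below -/
import Mathlib

section
/- Suppose W = (φ¹,φ²,φ³) is a smooth, sufficiently decaying solution of the system −κ₁Δφ¹ = φ²φ³, −κ₂Δφ² = φ¹φ³, −κ₃Δφ³ = φ¹φ² on ℝ⁶, with K(W) and V(W) finite. Then for all α, β ∈ ℝ one has the Pohozaev-type identity [2K(W) − 3V(W)]α − [4K(W) − 6V(W)]β = 0; consequently 2K(W) = 3V(W), i.e. K(W) : V(W) = 3 : 2. -/
open MeasureTheory

/-- Laplacian on `ℝ⁶` as sum of repeated directional derivatives. -/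
noncomputable def lap (f : EuclideanSpace ℝ (Fin 6) → ℝ) (x : EuclideanSpace ℝ (Fin 6)) : ℝ :=
  ∑ i : Fin 6,
    fderiv ℝ (fun y => fderiv ℝ f y (EuclideanSpace.single i (1 : ℝ))) x
      (EuclideanSpace.single i (1 : ℝ))

/-- Kinetic energy of a real triple. -/
noncomputable def kinEnergyR (κ₁ κ₂ κ₃ : ℝ) (φ₁ φ₂ φ₃ : EuclideanSpace ℝ (Fin 6) → ℝ) : ℝ :=
  κ₁ / 2 * (∫ x, ‖fderiv ℝ φ₁ x‖ ^ 2) + κ₂ / 2 * (∫ x, ‖fderiv ℝ φ₂ x‖ ^ 2)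
    + κ₃ / 2 * (∫ x, ‖fderiv ℝ φ₃ x‖ ^ 2)

/-- Potential energy of a real triple. -/
noncomputable def potEnergyR (φ₁ φ₂ φ₃ : EuclideanSpace ℝ (Fin 6) → ℝ) : ℝ :=
  ∫ x, φ₁ x * φ₂ x * φ₃ x

section aux

local notation "E6" => EuclideanSpace ℝ (Fin 6)

/-- Squared operator norm of a functional on Euclidean space equals the sum of squares of
its values on the standard basis. -/
lemma norm_sq_eq_sum_sq (ℓ : E6 →L[ℝ] ℝ) :
    ‖ℓ‖ ^ 2 = ∑ i : Fin 6, ℓ (EuclideanSpace.single i (1 : ℝ)) ^ 2 := by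
  set v : E6 := (InnerProductSpace.toDual ℝ E6).symm ℓ with hv
  have hval : ∀ w : E6, ℓ w = inner ℝ v w := fun w =>
    (InnerProductSpace.toDual_symm_apply (𝕜 := ℝ)).symm
  have hnorm : ‖ℓ‖ = ‖v‖ := by
    rw [hv]; exact ((InnerProductSpace.toDual ℝ E6).symm.norm_map ℓ).symm
  have hsingle : ∀ i : Fin 6, ℓ (EuclideanSpace.single i (1 : ℝ)) = v i := by
    intro i
    rw [hval]
    simp [EuclideanSpace.inner_single_right]
  have hv2 : ‖v‖ ^ 2 = ∑ i : Fin 6, v i ^ 2 := by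
    rw [← real_inner_self_eq_norm_sq]
    simp only [PiLp.inner_apply, RCLike.inner_apply, conj_trivial, sq]
  rw [hnorm, hv2]
  exact Finset.sum_congr rfl fun i _ => by rw [hsingle i]

lemma contDiff_dirDeriv {φ : E6 → ℝ} (hs : ContDiff ℝ (⊤ : ℕ∞) φ) (v : E6) :
    ContDiff ℝ (⊤ : ℕ∞) fun y => fderiv ℝ φ y v :=
  (hs.fderiv_right (by simp)).clm_apply contDiff_const

lemma hasCompactSupport_dirDeriv {φ : E6 → ℝ} (hc : HasCompactSupport φ) (v : E6) :
    HasCompactSupport fun y => fderiv ℝ φ y v :=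
  hc.fderiv_apply ℝ v

/-- Integration by parts: `∫ ‖∇φ‖² = -∫ φ Δφ` for smooth compactly supported `φ`. -/
lemma integral_norm_fderiv_sq {φ : E6 → ℝ} (hs : ContDiff ℝ (⊤ : ℕ∞) φ)
    (hc : HasCompactSupport φ) :
    (∫ x, ‖fderiv ℝ φ x‖ ^ 2) = -∫ x, φ x * lap φ x := by
  have hφcont : Continuous φ := hs.continuous
  have key : ∀ i : Fin 6,
      (∫ x, φ x * fderiv ℝ (fun y => fderiv ℝ φ y (EuclideanSpace.single i (1 : ℝ))) x
        (EuclideanSpace.single i (1 : ℝ)))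
      = -∫ x, fderiv ℝ φ x (EuclideanSpace.single i (1 : ℝ)) ^ 2 := by
    intro i
    set v := EuclideanSpace.single i (1 : ℝ)
    set g : E6 → ℝ := fun y => fderiv ℝ φ y v with hg
    have hgs : ContDiff ℝ (⊤ : ℕ∞) g := contDiff_dirDeriv hs v
    have hgc : HasCompactSupport g := hasCompactSupport_dirDeriv hc v
    have hg's : Continuous fun y => fderiv ℝ g y v := (contDiff_dirDeriv hgs v).continuous
    have hg'c : HasCompactSupport fun y => fderiv ℝ g y v := hasCompactSupport_dirDeriv hgc v
    have hfvc : Continuous fun y => fderiv ℝ φ y v := (contDiff_dirDeriv hs v).continuous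
    have h1 : Integrable (fun x => fderiv ℝ φ x v * g x) volume :=
      ((hfvc.mul hgs.continuous).integrable_of_hasCompactSupport (hgc.mul_left))
    have h2 : Integrable (fun x => φ x * fderiv ℝ g x v) volume :=
      ((hφcont.mul hg's).integrable_of_hasCompactSupport (hg'c.mul_left))
    have h3 : Integrable (fun x => φ x * g x) volume :=
      ((hφcont.mul hgs.continuous).integrable_of_hasCompactSupport (hgc.mul_left))
    have := integral_mul_fderiv_eq_neg_fderiv_mul_of_integrable (𝕜 := ℝ)
      (f := φ) (g := g) (v := v) h1 h2 h3 (fun x _ => hs.differentiable (by simp) x)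
      (fun x _ => hgs.differentiable (by simp) x)
    rw [this]
    congr 1
    exact integral_congr_ae (Filter.Eventually.of_forall fun x => by simp [hg, sq])
  have hint : ∀ i : Fin 6,
      Integrable (fun x => φ x * fderiv ℝ (fun y => fderiv ℝ φ y
        (EuclideanSpace.single i (1 : ℝ))) x (EuclideanSpace.single i (1 : ℝ))) volume := by
    intro i
    set v := EuclideanSpace.single i (1 : ℝ)
    have hgs : ContDiff ℝ (⊤ : ℕ∞) fun y => fderiv ℝ φ y v := contDiff_dirDeriv hs v
    have hgc : HasCompactSupport fun y => fderiv ℝ φ y v := hasCompactSupport_dirDeriv hc v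
    exact ((hφcont.mul (contDiff_dirDeriv hgs v).continuous).integrable_of_hasCompactSupport
      ((hasCompactSupport_dirDeriv hgc v).mul_left))
  have hL : (∫ x, φ x * lap φ x) = ∑ i : Fin 6,
      ∫ x, φ x * fderiv ℝ (fun y => fderiv ℝ φ y (EuclideanSpace.single i (1 : ℝ))) x
        (EuclideanSpace.single i (1 : ℝ)) := by
    rw [← integral_finset_sum _ fun i _ => hint i]
    congr 1; funext x; rw [lap, Finset.mul_sum]
  have hR : (∫ x, ‖fderiv ℝ φ x‖ ^ 2) = ∑ i : Fin 6,
      ∫ x, fderiv ℝ φ x (EuclideanSpace.single i (1 : ℝ)) ^ 2 := by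
    rw [← integral_finset_sum _ (fun i _ => ?_)]
    · congr 1; funext x; exact norm_sq_eq_sum_sq _
    · set v := EuclideanSpace.single i (1 : ℝ)
      have hfvc : Continuous fun y => fderiv ℝ φ y v := (contDiff_dirDeriv hs v).continuous
      have : HasCompactSupport fun y => fderiv ℝ φ y v ^ 2 := by
        apply (hasCompactSupport_dirDeriv hc v).mono
        intro x hx
        simp only [Function.mem_support] at hx ⊢
        exact fun h0 => hx (by rw [h0]; ring)
      exact (hfvc.pow 2).integrable_of_hasCompactSupport this
  rw [hR, hL, ← Finset.sum_neg_distrib]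
  exact Finset.sum_congr rfl fun i _ => by rw [key i, neg_neg]

end aux

/-- Pohozaev-type identity: a smooth, sufficiently decaying solution `W = (φ¹,φ²,φ³)` of
the ground-state system satisfies `[2K−3V]α − [4K−6V]β = 0` for all `α, β`, hence
`2K(W) = 3V(W)`, i.e. `K(W) : V(W) = 3 : 2`. -/
theorem pohozaev_identity (κ₁ κ₂ κ₃ : ℝ) (hκ₁ : 0 < κ₁) (hκ₂ : 0 < κ₂) (hκ₃ : 0 < κ₃)
    (φ₁ φ₂ φ₃ : EuclideanSpace ℝ (Fin 6) → ℝ)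
    (hs₁ : ContDiff ℝ (⊤ : ℕ∞) φ₁) (hs₂ : ContDiff ℝ (⊤ : ℕ∞) φ₂) (hs₃ : ContDiff ℝ (⊤ : ℕ∞) φ₃)
    (hc₁ : HasCompactSupport φ₁) (hc₂ : HasCompactSupport φ₂) (hc₃ : HasCompactSupport φ₃)
    (hpde₁ : ∀ x, -κ₁ * lap φ₁ x = φ₂ x * φ₃ x)
    (hpde₂ : ∀ x, -κ₂ * lap φ₂ x = φ₁ x * φ₃ x)
    (hpde₃ : ∀ x, -κ₃ * lap φ₃ x = φ₁ x * φ₂ x) :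
    (∀ α β : ℝ,
      (2 * kinEnergyR κ₁ κ₂ κ₃ φ₁ φ₂ φ₃ - 3 * potEnergyR φ₁ φ₂ φ₃) * α
        - (4 * kinEnergyR κ₁ κ₂ κ₃ φ₁ φ₂ φ₃ - 6 * potEnergyR φ₁ φ₂ φ₃) * β = 0) ∧
    2 * kinEnergyR κ₁ κ₂ κ₃ φ₁ φ₂ φ₃ = 3 * potEnergyR φ₁ φ₂ φ₃ := by
  have key : ∀ (κ : ℝ) (φ ψ₁ ψ₂ : EuclideanSpace ℝ (Fin 6) → ℝ),
      ContDiff ℝ (⊤ : ℕ∞) φ → HasCompactSupport φ → (∀ x, -κ * lap φ x = ψ₁ x * ψ₂ x) →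
      κ * (∫ x, ‖fderiv ℝ φ x‖ ^ 2) = ∫ x, φ x * (ψ₁ x * ψ₂ x) := by
    intro κ φ ψ₁ ψ₂ hs hc hpde
    rw [integral_norm_fderiv_sq hs hc]
    have : (∫ x, φ x * (ψ₁ x * ψ₂ x)) = ∫ x, -κ * (φ x * lap φ x) := by
      congr 1; funext x; rw [← hpde x]; ring
    rw [this, integral_const_mul]; ring
  have h1 := key κ₁ φ₁ φ₂ φ₃ hs₁ hc₁ hpde₁
  have h2 := key κ₂ φ₂ φ₁ φ₃ hs₂ hc₂ hpde₂
  have h3 := key κ₃ φ₃ φ₁ φ₂ hs₃ hc₃ hpde₃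
  have e1 : (∫ x, φ₁ x * (φ₂ x * φ₃ x)) = potEnergyR φ₁ φ₂ φ₃ := by
    unfold potEnergyR; congr 1; funext x; ring
  have e2 : (∫ x, φ₂ x * (φ₁ x * φ₃ x)) = potEnergyR φ₁ φ₂ φ₃ := by
    unfold potEnergyR; congr 1; funext x; ring
  have e3 : (∫ x, φ₃ x * (φ₁ x * φ₂ x)) = potEnergyR φ₁ φ₂ φ₃ := by
    unfold potEnergyR; congr 1; funext x; ring
  rw [e1] at h1; rw [e2] at h2; rw [e3] at h3
  have hmain : 2 * kinEnergyR κ₁ κ₂ κ₃ φ₁ φ₂ φ₃ = 3 * potEnergyR φ₁ φ₂ φ₃ := by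
    unfold kinEnergyR
    nlinarith [h1, h2, h3]
  exact ⟨fun α β => by
    have h4 : 4 * kinEnergyR κ₁ κ₂ κ₃ φ₁ φ₂ φ₃ = 6 * potEnergyR φ₁ φ₂ φ₃ := by linarith
    rw [hmain, h4]; ring, hmain⟩
end

section
/- Fix C_GN > 0 and set K_W := 4/(9 C_GN²), E_W := K_W/3. Let K, V, E : I → ℝ be continuous with E = K − V constant equal to some E₀ < E_W, with V(t) ≤ C_GN K(t)^{3/2} and K(t) ≥ 0 for all t, and suppose K(t₀) < K_W for some t₀. Then K(t) ≠ K_W for all t ∈ I, and by connectedness K(t) < K_W for all t ∈ I; moreover if E₀ ≤ (1−δ)E_W for δ ∈ (0,1), there exists δ′ > 0 with K(t) ≤ (1−δ′)K_W for all t ∈ I. -/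
set_option maxHeartbeats 1000000 in
/-- Kinetic-energy trapping below the ground state: with `K_W = 4/(9C_GN²)`,
`E_W = K_W/3`, a continuous kinetic energy `K` on an interval `I` with conserved
energy `E₀ < E_W`, `E = K − V`, `V ≤ C_GN K^{3/2}`, `K ≥ 0`, and `K(t₀) < K_W` at one
point, never equals `K_W`, stays below `K_W`, and if `E₀ ≤ (1−δ)E_W` there is `δ′ > 0`
with `K(t) ≤ (1−δ′)K_W` on all of `I`. -/
theorem kinetic_trapping (CGN : ℝ) (hCGN : 0 < CGN) (KW EW : ℝ)
    (hKW : KW = 4 / (9 * CGN ^ 2)) (hEW : EW = KW / 3)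
    (I : Set ℝ) (hI : I.OrdConnected)
    (K V E : ℝ → ℝ)
    (hKcont : ContinuousOn K I) (hVcont : ContinuousOn V I) (hEcont : ContinuousOn E I)
    (hEKV : ∀ t ∈ I, E t = K t - V t)
    (E₀ : ℝ) (hEconst : ∀ t ∈ I, E t = E₀) (hE₀lt : E₀ < EW)
    (hGN : ∀ t ∈ I, V t ≤ CGN * (K t) ^ ((3 : ℝ) / 2))
    (hKnn : ∀ t ∈ I, 0 ≤ K t)
    (δ : ℝ) (hδ : 0 < δ) (hδ1 : δ < 1) (hE₀ : E₀ ≤ (1 - δ) * EW)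
    (t₀ : ℝ) (ht₀ : t₀ ∈ I) (hK₀ : K t₀ < KW) :
    (∀ t ∈ I, K t ≠ KW) ∧ (∀ t ∈ I, K t < KW) ∧
    ∃ δ' > (0 : ℝ), ∀ t ∈ I, K t ≤ (1 - δ') * KW := by
  have hCGN2 : (0:ℝ) < CGN ^ 2 := by positivity
  have hKWpos : 0 < KW := by rw [hKW]; positivity
  set w : ℝ := 2 / (3 * CGN) with hw
  have hwpos : 0 < w := by positivity
  have hwsq : w ^ 2 = KW := by rw [hKW, hw]; field_simp; ring
  have hCw : CGN * w = 2/3 := by rw [hw]; field_simp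
  have hsqrtKW : Real.sqrt KW = w := by rw [← hwsq, Real.sqrt_sq hwpos.le]
  -- key energy inequality
  have key : ∀ t ∈ I, K t - CGN * Real.sqrt (K t) ^ 3 ≤ E₀ := by
    intro t ht
    have h1 := hGN t ht
    have h2 : (K t) ^ ((3:ℝ)/2) = Real.sqrt (K t) ^ 3 := by
      rw [show ((3:ℝ)/2) = (1/2) * ((3:ℕ):ℝ) by push_cast; ring,
        Real.rpow_mul (hKnn t ht), Real.rpow_natCast, ← Real.sqrt_eq_rpow]
    rw [h2] at h1
    have h3 := hEKV t ht
    have h4 := hEconst t ht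
    linarith
  -- part 1 : K t ≠ KW
  have hne : ∀ t ∈ I, K t ≠ KW := by
    intro t ht heq
    have hk := key t ht
    rw [heq, hsqrtKW] at hk
    have hCw3 : CGN * w ^ 3 = 2/3 * w ^ 2 := by
      have : CGN * w ^ 3 = (CGN * w) * w ^ 2 := by ring
      rw [this, hCw]
    rw [hEW] at hE₀lt
    linarith [hwsq]
  -- part 2 : K t < KW
  have hltAll : ∀ t ∈ I, K t < KW := by
    intro t ht
    by_contra h
    push_neg at h
    have hlt : KW < K t := lt_of_le_of_ne h (Ne.symm (hne t ht))
    have hsub : Set.uIcc t₀ t ⊆ I := hI.uIcc_subset ht₀ ht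
    have hKc : ContinuousOn K (Set.uIcc t₀ t) := hKcont.mono hsub
    have hmem : KW ∈ Set.uIcc (K t₀) (K t) :=
      Set.mem_uIcc.2 (Or.inl ⟨hK₀.le, hlt.le⟩)
    obtain ⟨s, hs, hKs⟩ := intermediate_value_uIcc hKc hmem
    exact hne s (hsub hs) hKs
  refine ⟨hne, hltAll, Real.sqrt δ / 2, div_pos (Real.sqrt_pos.2 hδ) two_pos, ?_⟩
  intro t ht
  by_contra h
  push_neg at h
  set u : ℝ := Real.sqrt δ / 2 with hu
  set s : ℝ := Real.sqrt (K t) with hsdef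
  have hs0 : 0 ≤ s := Real.sqrt_nonneg _
  have hssq : s ^ 2 = K t := Real.sq_sqrt (hKnn t ht)
  have hupos : 0 < u := div_pos (Real.sqrt_pos.2 hδ) two_pos
  have husq : u ^ 2 = δ / 4 := by
    rw [hu, div_pow, Real.sq_sqrt hδ.le]; norm_num
  have hsw : s < w := by nlinarith [hltAll t ht]
  have hs2 : (1 - u) * w ^ 2 < s ^ 2 := by rw [hssq, hwsq]; exact h
  have hk := key t ht
  rw [← hsdef, ← hssq] at hk
  have hCs : CGN * w * s ^ 3 = 2/3 * s ^ 3 := by rw [hCw]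
  have h3 : 3 * w * s ^ 2 - 2 * s ^ 3 ≤ 3 * w * E₀ := by
    nlinarith [mul_le_mul_of_nonneg_left hk (by positivity : (0:ℝ) ≤ 3*w), hCs]
  have hws : w - s ≤ u * w := by nlinarith [mul_nonneg hupos.le hs0]
  have hws0 : 0 ≤ w - s := by linarith
  have hb1 : (w - s) ^ 2 ≤ (u * w) ^ 2 := by nlinarith
  have hbound : (w - s) ^ 2 * (w + 2*s) ≤ 3 * u ^ 2 * w ^ 3 := by
    have hw3 : w + 2*s ≤ 3*w := by linarith
    have := mul_le_mul hb1 hw3 (by linarith) (by positivity)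
    calc (w - s) ^ 2 * (w + 2*s) ≤ (u*w)^2 * (3*w) := this
      _ = 3 * u ^ 2 * w ^ 3 := by ring
  have hid : 3 * w * s ^ 2 - 2 * s ^ 3 = w ^ 3 - (w - s) ^ 2 * (w + 2*s) := by ring
  have husq3 : u ^ 2 * w ^ 3 = δ / 4 * w ^ 3 := by rw [husq]
  have hfin : (1 - δ) * w ^ 3 < 3 * w * s ^ 2 - 2 * s ^ 3 := by
    nlinarith [mul_pos hδ (pow_pos hwpos 3)]
  have hE : (1 - δ) * EW < E₀ := by
    rw [hEW, ← hwsq]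
    nlinarith
  linarith
end

section
/- Gronwall-type acausal inequality: fix γ > 0, let 0 < η < (1 − 2^{−γ})/2, and let {bₖ}ₖ≥0, {xₖ}ₖ≥0 be bounded sequences of nonnegative reals satisfying xₖ ≤ bₖ + η Σ_{l=0}^∞ 2^{−γ|k−l|} xₗ for all k ≥ 0. Then there exists r = r(η, γ) ∈ (2^{−γ}, 1) and a constant C such that xₖ ≤ C Σ_{l=0}^∞ r^{|k−l|} bₗ for all k ≥ 0. -/
open Real

lemma geom_abs_le {c : ℝ} (hc0 : 0 < c) (hc1 : c < 1) (k l : ℕ) :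
    c ^ |(k : ℝ) - l| ≤ c ^ (-(k : ℝ)) * c ^ l := by
  have h1 : (l : ℝ) - k ≤ |(k : ℝ) - l| := by
    rw [abs_sub_comm]; exact le_abs_self _
  calc c ^ |(k : ℝ) - l| ≤ c ^ ((l : ℝ) - k) :=
        Real.rpow_le_rpow_of_exponent_ge hc0 hc1.le h1
    _ = c ^ (-(k : ℝ)) * c ^ l := by
        rw [sub_eq_add_neg, Real.rpow_add hc0, mul_comm, Real.rpow_natCast]

lemma geom_abs_nonneg {c : ℝ} (hc0 : 0 < c) (k l : ℕ) : 0 ≤ c ^ |(k : ℝ) - l| :=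
  (Real.rpow_pos_of_pos hc0 _).le

lemma geom_abs_summable {c : ℝ} (hc0 : 0 < c) (hc1 : c < 1) (k : ℕ) {u : ℕ → ℝ} {M : ℝ}
    (hu0 : ∀ l, 0 ≤ u l) (huM : ∀ l, u l ≤ M) :
    Summable (fun l : ℕ => c ^ |(k : ℝ) - l| * u l) := by
  apply Summable.of_nonneg_of_le
    (fun l => mul_nonneg (geom_abs_nonneg hc0 k l) (hu0 l))
    (fun l => ?_) (((summable_geometric_of_lt_one hc0.le hc1).mul_left (c ^ (-(k:ℝ)) * M)))
  calc c ^ |(k : ℝ) - l| * u l ≤ (c ^ (-(k : ℝ)) * c ^ l) * M := by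
        apply mul_le_mul (geom_abs_le hc0 hc1 k l) (huM l) (hu0 l)
        positivity
    _ = c ^ (-(k:ℝ)) * M * c ^ l := by ring

lemma geom_abs_tsum_le {c : ℝ} (hc0 : 0 < c) (hc1 : c < 1) (k : ℕ) :
    ∑' l : ℕ, c ^ |(k : ℝ) - l| ≤ 2 / (1 - c) := by
  have hsum : Summable (fun l : ℕ => c ^ |(k : ℝ) - l|) := by
    simpa using geom_abs_summable hc0 hc1 k (u := fun _ => 1) (M := 1)
      (fun _ => zero_le_one) (fun _ => le_rfl)
  have hgeo : Summable (fun n : ℕ => c ^ n) := summable_geometric_of_lt_one hc0.le hc1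
  rw [← Summable.sum_add_tsum_nat_add (f := fun l : ℕ => c ^ |(k : ℝ) - l|) k hsum]
  have htail : ∑' i : ℕ, c ^ |(k : ℝ) - (i + k : ℕ)| = (1 - c)⁻¹ := by
    rw [← tsum_geometric_of_lt_one hc0.le hc1]
    congr 1; ext i
    have h1 : |(k : ℝ) - ((i + k : ℕ) : ℝ)| = (i : ℝ) := by
      push_cast
      rw [show (k:ℝ) - ((i:ℝ) + k) = -(i:ℝ) by ring, abs_neg, abs_of_nonneg i.cast_nonneg]
    rw [h1, Real.rpow_natCast]
  have hhead : ∑ l ∈ Finset.range k, c ^ |(k : ℝ) - l| ≤ (1 - c)⁻¹ := by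
    have h1 : ∑ l ∈ Finset.range k, c ^ |(k : ℝ) - l| = ∑ j ∈ Finset.range k, c ^ (j + 1) := by
      rw [← Finset.sum_range_reflect]
      apply Finset.sum_congr rfl
      intro j hj
      rw [Finset.mem_range] at hj
      have h2 : k - 1 - j + (j + 1) = k := by omega
      have h3 : ((k - 1 - j : ℕ) : ℝ) + ((j : ℝ) + 1) = (k : ℝ) := by
        exact_mod_cast congrArg (Nat.cast : ℕ → ℝ) h2
      have h4 : |(k : ℝ) - ((k - 1 - j : ℕ) : ℝ)| = ((j + 1 : ℕ) : ℝ) := by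
        push_cast
        rw [abs_of_nonneg] <;> linarith
      rw [h4, Real.rpow_natCast]
    rw [h1]
    calc ∑ j ∈ Finset.range k, c ^ (j + 1) ≤ ∑ j ∈ Finset.range k, c ^ j :=
          Finset.sum_le_sum fun j _ => pow_le_pow_of_le_one hc0.le hc1.le (by omega)
      _ ≤ ∑' j : ℕ, c ^ j := Summable.sum_le_tsum _ (fun i _ => pow_nonneg hc0.le i) hgeo
      _ = (1 - c)⁻¹ := tsum_geometric_of_lt_one hc0.le hc1
  have h2c : 2 / (1 - c) = (1 - c)⁻¹ + (1 - c)⁻¹ := by ring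
  linarith


lemma conv_pointwise {q r : ℝ} (hq0 : 0 < q) (hr0 : 0 < r) (hr1 : r < 1) (k m l : ℕ) :
    q ^ |(k:ℝ) - l| * r ^ |(l:ℝ) - m| ≤ (q / r) ^ |(k:ℝ) - l| * r ^ |(k:ℝ) - m| := by
  have htri : |(k:ℝ) - m| - |(k:ℝ) - l| ≤ |(l:ℝ) - m| := by
    have := abs_sub_abs_le_abs_sub ((k:ℝ) - m) ((k:ℝ) - l)
    have h2 : (k:ℝ) - m - ((k:ℝ) - l) = (l:ℝ) - m := by ring
    calc |(k:ℝ) - m| - |(k:ℝ) - l| ≤ |(k:ℝ) - m - ((k:ℝ) - l)| := this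
      _ = |(l:ℝ) - m| := by rw [h2]
  have h1 : r ^ |(l:ℝ) - m| ≤ r ^ (|(k:ℝ) - m| - |(k:ℝ) - l|) :=
    Real.rpow_le_rpow_of_exponent_ge hr0 hr1.le htri
  have h2 : r ^ (|(k:ℝ) - m| - |(k:ℝ) - l|) = r ^ |(k:ℝ) - m| / r ^ |(k:ℝ) - l| :=
    Real.rpow_sub hr0 _ _
  have h3 : (q / r) ^ |(k:ℝ) - l| = q ^ |(k:ℝ) - l| / r ^ |(k:ℝ) - l| :=
    Real.div_rpow hq0.le hr0.le _
  calc q ^ |(k:ℝ) - l| * r ^ |(l:ℝ) - m|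
      ≤ q ^ |(k:ℝ) - l| * (r ^ |(k:ℝ) - m| / r ^ |(k:ℝ) - l|) := by
        apply mul_le_mul_of_nonneg_left _ (Real.rpow_pos_of_pos hq0 _).le
        rw [← h2]; exact h1
    _ = (q / r) ^ |(k:ℝ) - l| * r ^ |(k:ℝ) - m| := by
        rw [h3]; ring

lemma conv_tsum_le {q r : ℝ} (hq0 : 0 < q) (hqr : q < r) (hr1 : r < 1) (k m : ℕ) :
    ∑' l : ℕ, q ^ |(k:ℝ) - l| * r ^ |(l:ℝ) - m| ≤ (2 * r / (r - q)) * r ^ |(k:ℝ) - m| := by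
  have hr0 : 0 < r := hq0.trans hqr
  have hqr0 : 0 < q / r := div_pos hq0 hr0
  have hqr1 : q / r < 1 := (div_lt_one hr0).mpr hqr
  have hrhs : Summable (fun l : ℕ => (q / r) ^ |(k:ℝ) - l| * r ^ |(k:ℝ) - m|) :=
    geom_abs_summable hqr0 hqr1 k (u := fun _ => r ^ |(k:ℝ) - m|) (M := r ^ |(k:ℝ) - m|)
      (fun _ => geom_abs_nonneg hr0 k m) (fun _ => le_rfl)
  have hlhs : Summable (fun l : ℕ => q ^ |(k:ℝ) - l| * r ^ |(l:ℝ) - m|) := by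
    have hq1 : q < 1 := hqr.trans hr1
    apply geom_abs_summable hq0 hq1 k (u := fun l => r ^ |(l:ℝ) - m|) (M := 1)
      (fun l => geom_abs_nonneg hr0 l m)
    intro l
    exact Real.rpow_le_one hr0.le hr1.le (abs_nonneg _)
  calc ∑' l : ℕ, q ^ |(k:ℝ) - l| * r ^ |(l:ℝ) - m|
      ≤ ∑' l : ℕ, (q / r) ^ |(k:ℝ) - l| * r ^ |(k:ℝ) - m| :=
        Summable.tsum_le_tsum (fun l => conv_pointwise hq0 hr0 hr1 k m l) hlhs hrhs
    _ = (∑' l : ℕ, (q / r) ^ |(k:ℝ) - l|) * r ^ |(k:ℝ) - m| := tsum_mul_right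
    _ ≤ (2 / (1 - q / r)) * r ^ |(k:ℝ) - m| := by
        apply mul_le_mul_of_nonneg_right (geom_abs_tsum_le hqr0 hqr1 k)
          (geom_abs_nonneg hr0 k m)
    _ = (2 * r / (r - q)) * r ^ |(k:ℝ) - m| := by
        congr 1
        have h1 : r - q ≠ 0 := by linarith
        have h2 : (1 : ℝ) - q / r ≠ 0 := by
          have : q / r < 1 := hqr1
          linarith
        field_simp


/-- Acausal Gronwall-type inequality: fix `γ > 0`, `0 < η < (1 − 2^{−γ})/2`, and
bounded nonnegative sequences `b, x` with
`xₖ ≤ bₖ + η Σₗ 2^{−γ|k−l|} xₗ` for all `k`. Then there are `r ∈ (2^{−γ}, 1)` and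
`C > 0` such that `xₖ ≤ C Σₗ r^{|k−l|} bₗ` for all `k`. -/
theorem gronwall_acausal (γ η : ℝ) (hγ : 0 < γ)
    (hη0 : 0 < η) (hη : η < (1 - (2 : ℝ) ^ (-γ)) / 2)
    (b x : ℕ → ℝ) (hb0 : ∀ k, 0 ≤ b k) (hx0 : ∀ k, 0 ≤ x k)
    (hbB : ∃ M, ∀ k, b k ≤ M) (hxB : ∃ M, ∀ k, x k ≤ M)
    (hrec : ∀ k, x k ≤ b k + η * ∑' l : ℕ, (2 : ℝ) ^ (-(γ * |(k : ℝ) - (l : ℝ)|)) * x l) :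
    ∃ r : ℝ, (2 : ℝ) ^ (-γ) < r ∧ r < 1 ∧
      ∃ C > (0 : ℝ), ∀ k, x k ≤ C * ∑' l : ℕ, r ^ |(k : ℝ) - (l : ℝ)| * b l := by
  obtain ⟨Mb, hMb⟩ := hbB
  obtain ⟨Mx, hMx⟩ := hxB
  have hMx0 : 0 ≤ Mx := le_trans (hx0 0) (hMx 0)
  have hMb0 : 0 ≤ Mb := le_trans (hb0 0) (hMb 0)
  set q : ℝ := (2:ℝ) ^ (-γ) with hqdef
  have hq0 : 0 < q := Real.rpow_pos_of_pos two_pos _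
  have hq1 : q < 1 := Real.rpow_lt_one_of_one_lt_of_neg one_lt_two (neg_lt_zero.mpr hγ)
  have h2η : 0 < 1 - 2 * η := by linarith
  set r : ℝ := (q / (1 - 2*η) + 1) / 2 with hrdef
  have h5 : q < q / (1 - 2*η) := by
    rw [lt_div_iff₀ h2η]; nlinarith
  have h6 : q / (1 - 2*η) < 1 := by
    rw [div_lt_one h2η]; linarith
  have hqr : q < r := by rw [hrdef]; linarith
  have hr1 : r < 1 := by rw [hrdef]; linarith
  have hr0 : 0 < r := hq0.trans hqr
  have h7 : q / (1 - 2*η) < r := by rw [hrdef]; linarith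
  have h8 : 2 * η * r < r - q := by
    have h9 := (div_lt_iff₀ h2η).mp h7
    nlinarith
  have hrq0 : 0 < r - q := by linarith
  set C0 : ℝ := 2 * r / (r - q) with hC0def
  have hηC0 : η * C0 < 1 := by
    have h10 : η * C0 = (2*η*r)/(r-q) := by rw [hC0def]; ring
    rw [h10, div_lt_one hrq0]; exact h8
  have hC00 : 0 < C0 := by rw [hC0def]; positivity
  set C : ℝ := 1 / (1 - η * C0) with hCdef
  have hden : 0 < 1 - η * C0 := by linarith
  have hC : 0 < C := div_pos one_pos hden
  refine ⟨r, hqr, hr1, C, hC, ?_⟩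
  intro k
  have hker : ∀ (j l : ℕ), (2:ℝ) ^ (-(γ * |(j:ℝ) - l|)) = q ^ |(j:ℝ) - l| := by
    intro j l
    rw [hqdef, show -(γ * |(j:ℝ) - l|) = (-γ) * |(j:ℝ) - l| from (neg_mul γ _).symm,
      Real.rpow_mul (by norm_num : (0:ℝ) ≤ 2)]
  have hrec' : ∀ j, x j ≤ b j + η * ∑' l : ℕ, q ^ |(j:ℝ) - l| * x l := by
    intro j
    have h := hrec j
    simpa only [hker] using h
  have h1r : 0 < 1 - r := by linarith
  apply le_of_forall_pos_le_add
  intro ε hε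
  set δ : ℝ := ε * (1 - r) / (2 * C) with hδdef
  have hδ0 : 0 < δ := by rw [hδdef]; positivity
  set b' : ℕ → ℝ := fun l => b l + δ with hb'def
  have hb'0 : ∀ l, 0 ≤ b' l := fun l => add_nonneg (hb0 l) hδ0.le
  have hb'M : ∀ l, b' l ≤ Mb + δ := fun l => by
    simp only [hb'def]; linarith [hMb l]
  set S : ℕ → ℝ := fun j => ∑' m : ℕ, r ^ |(j:ℝ) - m| * b' m with hSdef
  have hSsumm : ∀ j : ℕ, Summable (fun m : ℕ => r ^ |(j:ℝ) - m| * b' m) :=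
    fun j => geom_abs_summable hr0 hr1 j hb'0 hb'M
  have hS_bj : ∀ j, b j + δ ≤ S j := by
    intro j
    have h1 : r ^ |(j:ℝ) - j| * b' j ≤ S j :=
      Summable.le_tsum (hSsumm j) j (fun m _ => mul_nonneg (geom_abs_nonneg hr0 j m) (hb'0 m))
    have h2 : |(j:ℝ) - j| = 0 := by simp
    rw [h2, Real.rpow_zero, one_mul] at h1
    exact h1
  have hSpos : ∀ j, δ ≤ S j := fun j => le_trans (by linarith [hb0 j]) (hS_bj j)
  have hS0 : ∀ j, 0 < S j := fun j => lt_of_lt_of_le hδ0 (hSpos j)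
  have hSnn : ∀ j, 0 ≤ S j := fun j => (hS0 j).le
  have hkersumm : ∀ j : ℕ, Summable (fun m : ℕ => r ^ |(j:ℝ) - m|) := by
    intro j
    simpa using geom_abs_summable hr0 hr1 j (u := fun _ => (1:ℝ)) (M := 1)
      (fun _ => zero_le_one) (fun _ => le_rfl)
  have hSle : ∀ j, S j ≤ (Mb + δ) * (2 / (1 - r)) := by
    intro j
    calc S j ≤ ∑' m : ℕ, (Mb + δ) * r ^ |(j:ℝ) - m| := by
          apply Summable.tsum_le_tsum _ (hSsumm j) ((hkersumm j).mul_left (Mb + δ))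
          intro m
          rw [mul_comm ((Mb+δ):ℝ)]
          exact mul_le_mul_of_nonneg_left (hb'M m) (geom_abs_nonneg hr0 j m)
      _ = (Mb + δ) * ∑' m : ℕ, r ^ |(j:ℝ) - m| := tsum_mul_left
      _ ≤ (Mb + δ) * (2 / (1 - r)) :=
          mul_le_mul_of_nonneg_left (geom_abs_tsum_le hr0 hr1 j) (by positivity)
  set f : ℕ → ℝ := fun j => x j / S j with hfdef
  have hbdd : BddAbove (Set.range f) := by
    refine ⟨Mx / δ, ?_⟩
    rintro y ⟨j, rfl⟩
    exact div_le_div₀ hMx0 (hMx j) hδ0 (hSpos j)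
  set A : ℝ := ⨆ j, f j with hAdef
  have hfA : ∀ j, f j ≤ A := fun j => le_ciSup hbdd j
  have hA0 : 0 ≤ A := le_trans (div_nonneg (hx0 0) (hSnn 0)) (hfA 0)
  have hxA : ∀ j, x j ≤ A * S j := by
    intro j
    have h := hfA j
    rw [hfdef] at h
    exact (div_le_iff₀ (hS0 j)).mp h
  -- key convolution estimate
  have hkey : ∀ j : ℕ, ∑' l : ℕ, q ^ |(j:ℝ) - l| * S l ≤ C0 * S j := by
    intro j
    set F : ℕ → ℕ → ℝ := fun l m => q ^ |(j:ℝ) - l| * (r ^ |(l:ℝ) - m| * b' m) with hFdef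
    have hrow : ∀ l, Summable (F l) := fun l =>
      (geom_abs_summable hr0 hr1 l hb'0 hb'M).mul_left _
    have hrow_sum : ∀ l, ∑' m, F l m = q ^ |(j:ℝ) - l| * S l := fun l => tsum_mul_left
    have hrowsummable : Summable (fun l => ∑' m, F l m) := by
      simp only [hrow_sum]
      exact geom_abs_summable hq0 hq1 j (u := S) (M := (Mb + δ) * (2 / (1 - r))) hSnn hSle
    have hcol : ∀ m, Summable (fun l => F l m) := by
      intro m
      apply geom_abs_summable hq0 hq1 j (u := fun l => r ^ |(l:ℝ) - m| * b' m) (M := Mb + δ)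
      · intro l; exact mul_nonneg (geom_abs_nonneg hr0 l m) (hb'0 m)
      · intro l
        calc r ^ |(l:ℝ) - m| * b' m ≤ 1 * (Mb + δ) :=
              mul_le_mul (Real.rpow_le_one hr0.le hr1.le (abs_nonneg _)) (hb'M m)
                (hb'0 m) zero_le_one
          _ = Mb + δ := one_mul _
    have huncurry : Summable (Function.uncurry F) := by
      exact (summable_prod_of_nonneg (fun p => mul_nonneg (geom_abs_nonneg hq0 j p.1)
        (mul_nonneg (geom_abs_nonneg hr0 p.1 p.2) (hb'0 p.2)))).mpr ⟨hrow, hrowsummable⟩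
    have hsum2 : Summable (fun m : ℕ => (C0 * r ^ |(j:ℝ) - m|) * b' m) := by
      have := (hSsumm j).mul_left C0
      apply this.congr
      intro m; ring
    have hsum1 : Summable (fun m : ℕ => (∑' l : ℕ, q ^ |(j:ℝ) - l| * r ^ |(l:ℝ) - m|) * b' m) := by
      apply Summable.of_nonneg_of_le _ _ hsum2
      · intro m
        apply mul_nonneg _ (hb'0 m)
        exact tsum_nonneg fun l => mul_nonneg (geom_abs_nonneg hq0 j l) (geom_abs_nonneg hr0 l m)
      · intro m
        exact mul_le_mul_of_nonneg_right (conv_tsum_le hq0 hqr hr1 j m) (hb'0 m)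
    calc ∑' l : ℕ, q ^ |(j:ℝ) - l| * S l = ∑' l : ℕ, ∑' m : ℕ, F l m := by
          exact (tsum_congr hrow_sum).symm
      _ = ∑' m : ℕ, ∑' l : ℕ, F l m := (Summable.tsum_comm' huncurry hrow hcol).symm
      _ = ∑' m : ℕ, (∑' l : ℕ, q ^ |(j:ℝ) - l| * r ^ |(l:ℝ) - m|) * b' m := by
          apply tsum_congr
          intro m
          rw [← tsum_mul_right]
          apply tsum_congr
          intro l
          rw [hFdef]; ring
      _ ≤ ∑' m : ℕ, (C0 * r ^ |(j:ℝ) - m|) * b' m := by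
          apply Summable.tsum_le_tsum _ hsum1 hsum2
          intro m
          exact mul_le_mul_of_nonneg_right (conv_tsum_le hq0 hqr hr1 j m) (hb'0 m)
      _ = C0 * S j := by
          rw [hSdef, ← tsum_mul_left]
          apply tsum_congr
          intro m; ring
  -- main pointwise bound
  have hmain : ∀ j, x j ≤ (1 + η * C0 * A) * S j := by
    intro j
    have hsumAS : Summable (fun l : ℕ => q ^ |(j:ℝ) - l| * (A * S l)) :=
      geom_abs_summable hq0 hq1 j (u := fun l => A * S l)
        (M := A * ((Mb + δ) * (2 / (1 - r))))
        (fun l => mul_nonneg hA0 (hSnn l))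
        (fun l => mul_le_mul_of_nonneg_left (hSle l) hA0)
    have h1 : ∑' l : ℕ, q ^ |(j:ℝ) - l| * x l ≤ A * (C0 * S j) := by
      calc ∑' l : ℕ, q ^ |(j:ℝ) - l| * x l ≤ ∑' l : ℕ, q ^ |(j:ℝ) - l| * (A * S l) := by
            apply Summable.tsum_le_tsum _ (geom_abs_summable hq0 hq1 j hx0 hMx) hsumAS
            intro l
            exact mul_le_mul_of_nonneg_left (hxA l) (geom_abs_nonneg hq0 j l)
        _ = A * ∑' l : ℕ, q ^ |(j:ℝ) - l| * S l := by
            rw [← tsum_mul_left]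
            apply tsum_congr
            intro l; ring
        _ ≤ A * (C0 * S j) := mul_le_mul_of_nonneg_left (hkey j) hA0
    have h2 := hrec' j
    have h3 := mul_le_mul_of_nonneg_left h1 hη0.le
    have h4 := hS_bj j
    have h5 : x j ≤ S j + η * (A * (C0 * S j)) := by linarith
    calc x j ≤ S j + η * (A * (C0 * S j)) := h5
      _ = (1 + η * C0 * A) * S j := by ring
  have hAle : A ≤ 1 + η * C0 * A := by
    apply ciSup_le
    intro j
    rw [hfdef, div_le_iff₀ (hS0 j)]
    exact hmain j
  have hAC : A ≤ C := by
    rw [hCdef, le_div_iff₀ hden]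
    nlinarith
  have hxk : x k ≤ C * S k :=
    le_trans (hxA k) (mul_le_mul_of_nonneg_right hAC (hSnn k))
  have hbsumm : Summable (fun m : ℕ => r ^ |(k:ℝ) - m| * b m) :=
    geom_abs_summable hr0 hr1 k hb0 hMb
  have hsplit : S k = (∑' m : ℕ, r ^ |(k:ℝ) - m| * b m) + δ * ∑' m : ℕ, r ^ |(k:ℝ) - m| := by
    simp only [hSdef]
    have h1 : ∀ m : ℕ, r ^ |(k:ℝ) - m| * b' m
        = r ^ |(k:ℝ) - m| * b m + δ * r ^ |(k:ℝ) - m| := by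
      intro m; rw [hb'def]; ring
    rw [tsum_congr h1, Summable.tsum_add hbsumm ((hkersumm k).mul_left δ), tsum_mul_left]
  have hT : ∑' m : ℕ, r ^ |(k:ℝ) - m| ≤ 2 / (1 - r) := geom_abs_tsum_le hr0 hr1 k
  have hTnn : 0 ≤ ∑' m : ℕ, r ^ |(k:ℝ) - m| := tsum_nonneg fun m => geom_abs_nonneg hr0 k m
  have hfinal : C * (δ * ∑' m : ℕ, r ^ |(k:ℝ) - m|) ≤ ε := by
    calc C * (δ * ∑' m : ℕ, r ^ |(k:ℝ) - m|) = (C * δ) * ∑' m : ℕ, r ^ |(k:ℝ) - m| := by ring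
      _ ≤ (C * δ) * (2 / (1 - r)) := mul_le_mul_of_nonneg_left hT (by positivity)
      _ = ε := by
          rw [hδdef]
          field_simp
  have hexp : C * S k = C * (∑' m : ℕ, r ^ |(k:ℝ) - m| * b m)
      + C * (δ * ∑' m : ℕ, r ^ |(k:ℝ) - m|) := by
    rw [hsplit]; ring
  linarith
end
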